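/- Let S ∈ 𝔪 satisfy tr(S²) = 0 and suppose the characteristic polynomial of S (regarded as a polynomial over ℂ) has n distinct roots in ℂ. Then {X ∈ 𝔰𝔬(p,q) : there exists c ∈ ℝ with X·S − S·X = c·S} = {0}. -/

import Mathlib

/-!
Complexify and work with the symmetric nondegenerate bilinear form `B(u, w) = uᵀ J w`,
`J = I_{p,q}`. Then `S` is `B`-self-adjoint and `X` is `B`-skew. Since `S` has `n` distinct
eigenvalues, its eigenvectors `vᵢ` form a basis which is `B`-orthogonal, so `B(vᵢ, vᵢ) ≠ 0`.
Pairing `(XS - SX) vᵢ = c λᵢ vᵢ` with `vᵢ` gives `c λᵢ B(vᵢ, vᵢ) = 0`, hence `c S = 0` and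
`X` commutes with `S`. Then `X vᵢ` lies in the `λᵢ`-eigenspace, so it is `B`-orthogonal to every
`vⱼ` with `j ≠ i`, and also to `vᵢ` by skewness; nondegeneracy gives `X vᵢ = 0`.
-/

open Matrix

/-- The diagonal matrix `I_{p,q}` with `p` ones followed by `q` minus-ones, over `ℝ`. -/
noncomputable def IpqR (p q : ℕ) : Matrix (Fin (p + q)) (Fin (p + q)) ℝ :=
  Matrix.diagonal (fun i => if (i : ℕ) < p then (1 : ℝ) else -1)

namespace Matrix

section Pairing

variable {K n : Type*} [CommRing K] [Fintype n] {J : Matrix n n K}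

theorem dotProduct_mulVec_comm_of_transpose_eq (hJ : Jᵀ = J) (u w : n → K) :
    u ⬝ᵥ (J *ᵥ w) = w ⬝ᵥ (J *ᵥ u) := by
  rw [dotProduct_mulVec, ← mulVec_transpose, hJ, dotProduct_comm]

theorem mulVec_dotProduct_mulVec_of_transpose_mul_eq {A B : Matrix n n K} (h : Aᵀ * J = J * B)
    (u w : n → K) : (A *ᵥ u) ⬝ᵥ (J *ᵥ w) = u ⬝ᵥ (J *ᵥ (B *ᵥ w)) := by
  rw [dotProduct_mulVec, ← vecMul_transpose, vecMul_vecMul, ← dotProduct_mulVec, h,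
    ← mulVec_mulVec]

end Pairing

section Field

variable {K n ι : Type*} [Field K] [Fintype n] {J S X : Matrix n n K}

theorem ext_of_mulVec_basis [DecidableEq n] {A B : Matrix n n K} (b : Module.Basis ι K (n → K))
    (h : ∀ i, A *ᵥ b i = B *ᵥ b i) : A = B :=
  toLin'.injective (b.ext fun i => by simpa using h i)

theorem dotProduct_mulVec_eq_zero_of_eigenvalue_ne (hS : Sᵀ * J = J * S) {u w : n → K} {a b : K}
    (hu : S *ᵥ u = a • u) (hw : S *ᵥ w = b • w) (hab : a ≠ b) : u ⬝ᵥ (J *ᵥ w) = 0 := by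
  have h := mulVec_dotProduct_mulVec_of_transpose_mul_eq hS u w
  rw [hu, hw, smul_dotProduct, mulVec_smul, dotProduct_smul, smul_eq_mul, smul_eq_mul] at h
  by_contra h0
  exact hab (mul_right_cancel₀ h0 h)

theorem dotProduct_mulVec_mulVec_self_eq_zero [NeZero (2 : K)] (hJ : Jᵀ = J)
    (hX : Xᵀ * J = -(J * X)) (u : n → K) : u ⬝ᵥ (J *ᵥ (X *ᵥ u)) = 0 := by
  have h := mulVec_dotProduct_mulVec_of_transpose_mul_eq (hX.trans (mul_neg J X).symm) u u
  rw [dotProduct_mulVec_comm_of_transpose_eq hJ, neg_mulVec, mulVec_neg, dotProduct_neg,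
    eq_neg_iff_add_eq_zero, ← two_mul] at h
  exact (mul_eq_zero.1 h).resolve_left two_ne_zero

theorem eq_zero_of_forall_basis_dotProduct_mulVec_eq_zero [DecidableEq n] (hJ : IsUnit J)
    (b : Module.Basis ι K (n → K)) {w : n → K} (h : ∀ i, b i ⬝ᵥ (J *ᵥ w) = 0) : w = 0 := by
  have hJw : J *ᵥ w = 0 := by
    refine dotProduct_eq_zero _ fun u => ?_
    have hl : (dotProductBilin K K).flip (J *ᵥ w) = 0 :=
      b.ext fun i => by simpa [dotProduct_comm] using h i
    rw [dotProduct_comm]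
    simpa using LinearMap.congr_fun hl u
  exact mulVec_injective_iff_isUnit.2 hJ (hJw.trans (mulVec_zero J).symm)

theorem dotProduct_mulVec_basis_self_ne_zero [DecidableEq n] (hJ : IsUnit J)
    (hS : Sᵀ * J = J * S) (b : Module.Basis ι K (n → K)) {lam : ι → K}
    (hlam : Function.Injective lam) (hb : ∀ i, S *ᵥ b i = lam i • b i) (i : ι) :
    b i ⬝ᵥ (J *ᵥ b i) ≠ 0 := by
  intro h0
  refine b.ne_zero i (eq_zero_of_forall_basis_dotProduct_mulVec_eq_zero hJ b fun j => ?_)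
  rcases eq_or_ne j i with rfl | hji
  · exact h0
  · exact dotProduct_mulVec_eq_zero_of_eigenvalue_ne hS (hb j) (hb i) (hlam.ne hji)

theorem eq_zero_of_commutator_eq_smul [DecidableEq n] [NeZero (2 : K)] (hJT : Jᵀ = J)
    (hJ : IsUnit J) (hS : Sᵀ * J = J * S) (b : Module.Basis ι K (n → K)) {lam : ι → K}
    (hlam : Function.Injective lam) (hb : ∀ i, S *ᵥ b i = lam i • b i)
    (hX : Xᵀ * J = -(J * X)) {c : K} (hc : X * S - S * X = c • S) : X = 0 := by
  have hcS : c • S = 0 := by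
    refine ext_of_mulVec_basis b fun i => ?_
    have hXi := dotProduct_mulVec_mulVec_self_eq_zero hJT hX (b i)
    have hSXi : b i ⬝ᵥ (J *ᵥ (S *ᵥ (X *ᵥ b i))) = 0 := by
      rw [← mulVec_dotProduct_mulVec_of_transpose_mul_eq hS, hb i, smul_dotProduct, hXi,
        smul_zero]
    have hpair := congrArg (fun A => b i ⬝ᵥ (J *ᵥ (A *ᵥ b i))) hc
    simp only [sub_mulVec, smul_mulVec, ← mulVec_mulVec, hb i, mulVec_smul, mulVec_sub,
      dotProduct_sub, dotProduct_smul, hXi, hSXi, sub_zero, smul_eq_mul, mul_zero] at hpair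
    have hci : c * lam i = 0 :=
      (mul_eq_zero.1 (by rw [mul_assoc]; exact hpair.symm)).resolve_right
        (dotProduct_mulVec_basis_self_ne_zero hJ hS b hlam hb i)
    rw [smul_mulVec, hb i, smul_smul, hci, zero_smul, zero_mulVec]
  have hXS : X * S = S * X := sub_eq_zero.1 (hc.trans hcS)
  have hXb : ∀ i, X *ᵥ b i = 0 := fun i => by
    have heig : S *ᵥ (X *ᵥ b i) = lam i • (X *ᵥ b i) := by
      rw [mulVec_mulVec, ← hXS, ← mulVec_mulVec, hb i, mulVec_smul]
    refine eq_zero_of_forall_basis_dotProduct_mulVec_eq_zero hJ b fun j => ?_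
    rcases eq_or_ne j i with rfl | hji
    · exact dotProduct_mulVec_mulVec_self_eq_zero hJT hX (b j)
    · exact dotProduct_mulVec_eq_zero_of_eigenvalue_ne hS (hb j) heig (hlam.ne hji)
  exact ext_of_mulVec_basis b fun i => by rw [hXb i, zero_mulVec]

end Field

end Matrix

section Eigenbasis

variable {K V ι : Type*} [Field K] [AddCommGroup V] [Module K V] [FiniteDimensional K V]
  [Fintype ι]

theorem Module.End.exists_basis_apply_eq_smul (f : Module.End K V) {lam : ι → K}
    (hlam : Function.Injective lam) (hroot : ∀ i, f.charpoly.IsRoot (lam i))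
    (hcard : Fintype.card ι = Module.finrank K V) :
    ∃ b : Module.Basis ι K V, ∀ i, f (b i) = lam i • b i := by
  choose v hv using fun i =>
    ((f.hasEigenvalue_iff_isRoot_charpoly (lam i)).2 (hroot i)).exists_hasEigenvector
  have hli : LinearIndependent K v := f.eigenvectors_linearIndependent' lam hlam v hv
  exact ⟨basisOfLinearIndependentOfCardEqFinrank' v hli hcard, fun i => by
    simpa [coe_basisOfLinearIndependentOfCardEqFinrank'] using (hv i).apply_eq_smul⟩

theorem Matrix.exists_basis_mulVec_eq_smul_of_charpoly_eq_prod {n : Type*} [Fintype n]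
    [DecidableEq n] {S : Matrix n n K} {lam : n → K} (hlam : Function.Injective lam)
    (h : S.charpoly = ∏ i, (Polynomial.X - Polynomial.C (lam i))) :
    ∃ b : Module.Basis n K (n → K), ∀ i, S *ᵥ b i = lam i • b i := by
  refine Module.End.exists_basis_apply_eq_smul S.toLin' hlam (fun i => ?_)
    (Module.finrank_fintype_fun_eq_card K).symm
  rw [charpoly_toLin', h, Polynomial.IsRoot, Polynomial.eval_prod]
  exact Finset.prod_eq_zero (Finset.mem_univ i) (by simp)

end Eigenbasis

theorem IpqR_transpose (p q : ℕ) : (IpqR p q)ᵀ = IpqR p q :=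
  diagonal_transpose _

theorem IpqR_mul_self (p q : ℕ) : IpqR p q * IpqR p q = 1 := by
  rw [IpqR, diagonal_mul_diagonal, ← diagonal_one]
  congr 1
  funext i
  split_ifs <;> norm_num

theorem stmt6 (p q : ℕ)
    (S : Matrix (Fin (p + q)) (Fin (p + q)) ℝ)
    (hSm : Sᵀ * IpqR p q = IpqR p q * S)
    (hdist : ∃ lam : Fin (p + q) → ℂ, Function.Injective lam ∧
      Polynomial.map (algebraMap ℝ ℂ) S.charpoly
        = ∏ i, (Polynomial.X - Polynomial.C (lam i))) :
    {X : Matrix (Fin (p + q)) (Fin (p + q)) ℝ |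
        (Xᵀ * IpqR p q + IpqR p q * X = 0) ∧
        ∃ c : ℝ, X * S - S * X = c • S} = {0} := by
  obtain ⟨lam, hlam, hfac⟩ := hdist
  let φ := (algebraMap ℝ ℂ).mapMatrix (m := Fin (p + q))
  obtain ⟨b, hb⟩ := exists_basis_mulVec_eq_smul_of_charpoly_eq_prod (S := φ S) hlam
    (by rw [RingHom.mapMatrix_apply, charpoly_map, hfac])
  refine Set.eq_singleton_iff_unique_mem.2 ⟨⟨by simp, 0, by simp⟩, ?_⟩
  rintro X ⟨hX, c, hc⟩
  refine map_injective (algebraMap ℝ ℂ).injective (?_ : φ X = φ 0)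
  rw [map_zero]
  have hT : ∀ A, φ Aᵀ = (φ A)ᵀ := fun _ => transpose_map
  have hsmul : ∀ (r : ℝ) A, φ (r • A) = (r : ℂ) • φ A := fun _ _ => by ext; simp [φ]
  refine eq_zero_of_commutator_eq_smul (J := φ (IpqR p q)) (c := (c : ℂ)) ?_ ?_ ?_ b hlam hb ?_ ?_
  · rw [← hT, IpqR_transpose]
  · exact (IsUnit.of_mul_eq_one _ (IpqR_mul_self p q)).map φ
  · simpa only [map_mul, hT] using congrArg φ hSm
  · simpa only [map_mul, map_neg, hT] using congrArg φ (eq_neg_of_add_eq_zero_left hX)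
  · simpa only [map_sub, map_mul, hsmul] using congrArg φ hc
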